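/- arXiv:math/9907077 — 5 statements merged into one kernel-verified Lean document; each statement's English description precedes it below -/
import Mathlib

section
/- In the fusion ring of affine su(N) at level k ≥ 2, with v the weight corresponding to the vector representation and a_i, s_i as below, the sector [a_i] appears exactly once in [v^i], and every irreducible subsector of [v^i] other than [a_i] and [s_i] appears with multiplicity at least 2. -/
attribute [local instance] Classical.propDecidable

noncomputable section

/-- Admissible `(N, h)` diagrams in shifted row-length coordinates: strictly
decreasing `ℓ : Fin N → Fin h` with `ℓ_{N-1} = 0`.  These parametrize the
level-`k` (`h = N + k`) integrable weights of affine su(N). -/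
def YW (N h : ℕ) : Type :=
  {l : Fin N → Fin h //
    (∀ a b : Fin N, a < b → l b < l a) ∧ ∀ m : Fin N, (m : ℕ) = N - 1 → (l m : ℕ) = 0}

instance (N h : ℕ) : Fintype (YW N h) := by unfold YW; infer_instance

instance (N h : ℕ) : DecidableEq (YW N h) := by unfold YW; infer_instance

/-- One step of fusion with the vector representation `v` (rule (1.5.13)):
either add a box to one of the first `N-1` rows, or add a box to the `N`-th row
(which amounts to deleting a full column). -/
def vstep (N h : ℕ) (l m : YW N h) : Prop :=
  (∃ j : Fin N, (j : ℕ) < N - 1 ∧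
      ∀ p : Fin N, (m.1 p : ℕ) = if p = j then (l.1 p : ℕ) + 1 else (l.1 p : ℕ)) ∨
  (∀ p : Fin N, (p : ℕ) < N - 1 → (m.1 p : ℕ) + 1 = (l.1 p : ℕ))

/-- Multiplicity of the sector `m` in the `n`-fold fusion power `v^n`. -/
def vmult (N h : ℕ) (vac : YW N h) : ℕ → YW N h → ℕ
  | 0, m => if m = vac then 1 else 0
  | n + 1, m => ∑ l : YW N h, if vstep N h l m then vmult N h vac n l else 0

namespace VP

variable {N h : ℕ}

lemma ywext (a b : YW N h) (hab : ∀ m : Fin N, (a.1 m : ℕ) = (b.1 m : ℕ)) : a = b :=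
  Subtype.ext (funext fun m => Fin.ext (hab m))

lemma anti_le (mu : YW N h) (d : ℕ) :
    ∀ a b : Fin N, (b : ℕ) = (a : ℕ) + d → (mu.1 b : ℕ) + d ≤ (mu.1 a : ℕ) := by
  induction d with
  | zero =>
      intro a b hab
      have : b = a := Fin.ext (by omega)
      subst this; omega
  | succ d ih =>
      intro a b hab
      have hb' : (a : ℕ) + d < N := by have := b.isLt; omega
      have h1 := ih a ⟨(a : ℕ) + d, hb'⟩ rfl
      have h2 : mu.1 b < mu.1 ⟨(a : ℕ) + d, hb'⟩ :=
        mu.2.1 _ b (by simp only [Fin.lt_def]; omega)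
      have h2' : (mu.1 b : ℕ) < (mu.1 ⟨(a : ℕ) + d, hb'⟩ : ℕ) := h2
      omega

lemma val_ge (mu : YW N h) (m : Fin N) : N - 1 - (m : ℕ) ≤ (mu.1 m : ℕ) := by
  have hm := m.isLt
  have hlast : (N : ℕ) - 1 < N := by omega
  have h0 : (mu.1 ⟨N - 1, hlast⟩ : ℕ) = 0 := mu.2.2 _ rfl
  have := anti_le mu (N - 1 - (m : ℕ)) m ⟨N - 1, hlast⟩ (by simp; omega)
  omega

lemma val_mono (mu : YW N h) (a b : Fin N) (hab : (a : ℕ) ≤ (b : ℕ)) :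
    (mu.1 b : ℕ) ≤ (mu.1 a : ℕ) := by
  have := anti_le mu ((b : ℕ) - (a : ℕ)) a b (by omega)
  omega

def S (mu : YW N h) : ℕ := ∑ m : Fin N, (mu.1 m : ℕ)

def svacN (N : ℕ) : ℕ := ∑ m : Fin N, (N - 1 - (m : ℕ))

lemma sum_range_ite_lt : ∀ (n c : ℕ), c ≤ n →
    (∑ t ∈ Finset.range n, if t < c then 1 else 0) = c := by
  intro n
  induction n with
  | zero => intro c hc; simp; omega
  | succ n ih =>
      intro c hc
      rw [Finset.sum_range_succ]
      by_cases hcn : c ≤ n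
      · rw [ih c hcn, if_neg (by omega)]; omega
      · have hc' : c = n + 1 := by omega
        subst hc'
        rw [if_pos (by omega)]
        have : (∑ t ∈ Finset.range n, if t < n + 1 then 1 else 0)
            = ∑ t ∈ Finset.range n, 1 := by
          apply Finset.sum_congr rfl
          intro x hx
          rw [if_pos (by simpa using Finset.mem_range.mp hx |>.trans (Nat.lt_succ_self n))]
        rw [this, Finset.sum_const, smul_eq_mul, mul_one, Finset.card_range]

lemma sum_fin_ite_lt (c : ℕ) (hc : c ≤ N) :
    (∑ m : Fin N, if (m : ℕ) < c then 1 else 0) = c := by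
  rw [Fin.sum_univ_eq_sum_range (fun t => if t < c then 1 else 0) N]
  exact sum_range_ite_lt N c hc

lemma sum_fin_ite_eq (t : ℕ) (ht : t < N) (x : ℕ) :
    (∑ m : Fin N, if (m : ℕ) = t then x else 0) = x := by
  rw [Finset.sum_eq_single (⟨t, ht⟩ : Fin N)]
  · simp
  · intro b _ hb
    rw [if_neg (fun hbt => hb (Fin.ext hbt))]
  · intro hb; exact absurd (Finset.mem_univ _) hb

def drop (mu : YW N h) (t : ℕ) (h1 : t + 1 < N)
    (h2 : (mu.1 ⟨t + 1, h1⟩ : ℕ) + 2 ≤ (mu.1 ⟨t, Nat.lt_of_succ_lt h1⟩ : ℕ)) : YW N h :=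
  ⟨fun p => ⟨(mu.1 p : ℕ) - (if (p : ℕ) = t then 1 else 0),
      lt_of_le_of_lt (Nat.sub_le _ _) (mu.1 p).isLt⟩, by
    constructor
    · intro a b hab
      have hab' : (a : ℕ) < (b : ℕ) := hab
      have hba : (mu.1 b : ℕ) < (mu.1 a : ℕ) := mu.2.1 a b hab
      simp only [Fin.mk_lt_mk]
      by_cases hbt : (b : ℕ) = t
      · rw [if_pos hbt, if_neg (show ¬(a : ℕ) = t by omega)]; omega
      · by_cases hat : (a : ℕ) = t
        · have hma : (mu.1 a : ℕ) = (mu.1 ⟨t, Nat.lt_of_succ_lt h1⟩ : ℕ) := by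
            rw [show a = ⟨t, Nat.lt_of_succ_lt h1⟩ from Fin.ext hat]
          have hb1 : (mu.1 b : ℕ) ≤ (mu.1 ⟨t + 1, h1⟩ : ℕ) :=
            val_mono mu ⟨t + 1, h1⟩ b (by simp only [Fin.val_mk]; omega)
          rw [if_pos hat, if_neg hbt]; omega
        · rw [if_neg hat, if_neg hbt]; omega
    · intro m hm
      have hmt : ¬ (m : ℕ) = t := by omega
      simp only [if_neg hmt]
      have := mu.2.2 m hm
      omega⟩

lemma drop_val (mu : YW N h) (t : ℕ) (h1 : t + 1 < N) (h2 : _) (p : Fin N) :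
    ((drop mu t h1 h2).1 p : ℕ) = (mu.1 p : ℕ) - (if (p : ℕ) = t then 1 else 0) := rfl

lemma vstep_drop (mu : YW N h) (t : ℕ) (h1 : t + 1 < N) (h2 : _) :
    vstep N h (drop mu t h1 h2) mu := by
  left
  refine ⟨⟨t, Nat.lt_of_succ_lt h1⟩, by simp only [Fin.val_mk]; omega, ?_⟩
  intro p
  by_cases hp : p = ⟨t, Nat.lt_of_succ_lt h1⟩
  · have hpt : (p : ℕ) = t := by rw [hp]
    have hpv : (mu.1 p : ℕ) = (mu.1 ⟨t, Nat.lt_of_succ_lt h1⟩ : ℕ) := by rw [hp]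
    rw [if_pos hp, drop_val]
    simp only [if_pos hpt]
    omega
  · rw [if_neg hp, drop_val]
    simp only [if_neg (fun hc => hp (Fin.ext hc) : ¬(p : ℕ) = t)]
    omega

lemma S_drop (mu : YW N h) (t : ℕ) (h1 : t + 1 < N) (h2 : _) :
    S (drop mu t h1 h2) + 1 = S mu := by
  have key : ∀ p : Fin N,
      (mu.1 p : ℕ) = ((drop mu t h1 h2).1 p : ℕ) + (if (p : ℕ) = t then 1 else 0) := by
    intro p
    rw [drop_val]
    by_cases hp : (p : ℕ) = t
    · have hpv : (mu.1 p : ℕ) = (mu.1 ⟨t, Nat.lt_of_succ_lt h1⟩ : ℕ) := by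
        rw [show p = ⟨t, Nat.lt_of_succ_lt h1⟩ from Fin.ext hp]
      rw [if_pos hp]
      omega
    · rw [if_neg hp]; omega
  have hS : S mu = S (drop mu t h1 h2) + ∑ m : Fin N, (if (m : ℕ) = t then 1 else 0) := by
    unfold S
    rw [← Finset.sum_add_distrib]
    exact Finset.sum_congr rfl fun p _ => key p
  rw [hS, sum_fin_ite_eq t (Nat.lt_of_succ_lt h1) 1]

lemma vmult_zero (vac m : YW N h) : vmult N h vac 0 m = if m = vac then 1 else 0 := rfl

lemma vmult_succ (vac : YW N h) (n : ℕ) (m : YW N h) :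
    vmult N h vac (n + 1) m
      = ∑ l : YW N h, if vstep N h l m then vmult N h vac n l else 0 := rfl

lemma svac_le (mu : YW N h) : svacN N ≤ S mu :=
  Finset.sum_le_sum fun m _ => val_ge mu m

lemma eq_vac_of_S (vac : YW N h) (hvac : ∀ m : Fin N, (vac.1 m : ℕ) = N - 1 - (m : ℕ))
    (mu : YW N h) (hS : S mu = svacN N) : mu = vac := by
  apply ywext
  intro m
  rw [hvac m]
  have hall := (Finset.sum_eq_sum_iff_of_le
      (fun m (_ : m ∈ Finset.univ) => val_ge mu m)).mp hS.symm
  exact (hall m (Finset.mem_univ m)).symm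

lemma S_vac (vac : YW N h) (hvac : ∀ m : Fin N, (vac.1 m : ℕ) = N - 1 - (m : ℕ)) :
    S vac = svacN N :=
  Finset.sum_congr rfl fun m _ => hvac m

/-- Any `vstep` from a small diagram is a box-removal (`drop`). -/
lemma step_eq_drop (hN : 2 ≤ N) (l mu : YW N h) (hst : vstep N h l mu)
    (hS : S l < svacN N + (N - 1)) :
    ∃ (t : ℕ) (h1 : t + 1 < N)
      (h2 : (mu.1 ⟨t + 1, h1⟩ : ℕ) + 2 ≤ (mu.1 ⟨t, Nat.lt_of_succ_lt h1⟩ : ℕ)),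
      l = drop mu t h1 h2 := by
  rcases hst with ⟨j, hj, hstep⟩ | hsub
  · have h1 : (j : ℕ) + 1 < N := by omega
    have hj1 : (mu.1 ⟨(j : ℕ) + 1, h1⟩ : ℕ) = (l.1 ⟨(j : ℕ) + 1, h1⟩ : ℕ) := by
      rw [hstep ⟨(j : ℕ) + 1, h1⟩,
        if_neg (by simp only [ne_eq, Fin.ext_iff, Fin.val_mk]; omega)]
    have hlj : (l.1 ⟨(j : ℕ) + 1, h1⟩ : ℕ) < (l.1 j : ℕ) :=
      l.2.1 j ⟨(j : ℕ) + 1, h1⟩ (by simp [Fin.lt_def])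
    have hmuj : (mu.1 j : ℕ) = (l.1 j : ℕ) + 1 := by rw [hstep j, if_pos rfl]
    have hjv : (mu.1 ⟨(j : ℕ), Nat.lt_of_succ_lt h1⟩ : ℕ) = (mu.1 j : ℕ) := by
      congr 1
    have h2 : (mu.1 ⟨(j : ℕ) + 1, h1⟩ : ℕ) + 2
        ≤ (mu.1 ⟨(j : ℕ), Nat.lt_of_succ_lt h1⟩ : ℕ) := by omega
    refine ⟨(j : ℕ), h1, h2, ?_⟩
    apply ywext
    intro p
    rw [drop_val]
    by_cases hp : p = j
    · have hpt : (p : ℕ) = (j : ℕ) := by rw [hp]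
      rw [hstep p, if_pos hp]
      simp only [if_pos hpt]
      omega
    · have hpt : ¬(p : ℕ) = (j : ℕ) := fun hc => hp (Fin.ext hc)
      rw [hstep p, if_neg hp]
      simp only [if_neg hpt]
      omega
  · exfalso
    have key : ∀ p : Fin N,
        (N - 1 - (p : ℕ)) + (if (p : ℕ) < N - 1 then 1 else 0) ≤ (l.1 p : ℕ) := by
      intro p
      by_cases hp : (p : ℕ) < N - 1
      · have := hsub p hp
        have := val_ge mu p
        rw [if_pos hp]
        omega
      · rw [if_neg hp]
        simpa using val_ge l p
    have hge : svacN N + (N - 1) ≤ S l := by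
      have h1 : (∑ p : Fin N, ((N - 1 - (p : ℕ)) + (if (p : ℕ) < N - 1 then 1 else 0)))
          ≤ S l := Finset.sum_le_sum fun p _ => key p
      rw [Finset.sum_add_distrib, sum_fin_ite_lt (N - 1) (by omega)] at h1
      exact h1
    omega

lemma size_inv (hN : 2 ≤ N) (vac : YW N h)
    (hvac : ∀ m : Fin N, (vac.1 m : ℕ) = N - 1 - (m : ℕ)) :
    ∀ n, n ≤ N - 1 → ∀ mu : YW N h, vmult N h vac n mu ≠ 0 → S mu = svacN N + n := by
  intro n
  induction n with
  | zero =>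
      intro _ mu hmu
      rw [vmult_zero] at hmu
      have : mu = vac := by by_contra hc; rw [if_neg hc] at hmu; exact hmu rfl
      subst this
      rw [S_vac mu hvac]; omega
  | succ n ih =>
      intro hn mu hmu
      rw [vmult_succ] at hmu
      obtain ⟨l, _, hl⟩ := Finset.exists_ne_zero_of_sum_ne_zero hmu
      have hstep : vstep N h l mu := by
        by_contra hc; rw [if_neg hc] at hl; exact hl rfl
      rw [if_pos hstep] at hl
      have hSl : S l = svacN N + n := ih (by omega) l hl
      obtain ⟨t, h1, h2, rfl⟩ := step_eq_drop hN l mu hstep (by omega)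
      have := S_drop mu t h1 h2
      omega

/-- Every diagram of the right size is reachable. -/
lemma reach (hN : 2 ≤ N) (vac : YW N h)
    (hvac : ∀ m : Fin N, (vac.1 m : ℕ) = N - 1 - (m : ℕ)) :
    ∀ n (mu : YW N h), S mu = svacN N + n → 1 ≤ vmult N h vac n mu := by
  intro n
  induction n with
  | zero =>
      intro mu hmu
      have : mu = vac := eq_vac_of_S vac hvac mu (by omega)
      rw [this, vmult_zero, if_pos rfl]
  | succ n ih =>
      intro mu hmu
      set P : ℕ → Prop := fun t => ∃ ht : t < N, N - 1 - t + 1 ≤ (mu.1 ⟨t, ht⟩ : ℕ) with hP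
      have hex : ∃ m : Fin N, P (m : ℕ) := by
        by_contra hc
        push_neg at hc
        have : ∀ m : Fin N, (mu.1 m : ℕ) = N - 1 - (m : ℕ) := by
          intro m
          have h1 := val_ge mu m
          have h2 := hc m
          simp only [hP, not_exists, not_le] at h2
          have h3 := h2 m.isLt
          rw [Fin.eta] at h3
          omega
        have : S mu = svacN N := Finset.sum_congr rfl fun m _ => this m
        omega
      obtain ⟨m0, hm0⟩ := hex
      set j := Nat.findGreatest P N with hj
      have hPj : P j := Nat.findGreatest_spec (le_of_lt m0.isLt) hm0
      obtain ⟨hjN, hjval⟩ := hPj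
      have hjne : j ≠ N - 1 := by
        intro hc
        have h0 : (mu.1 ⟨j, hjN⟩ : ℕ) = 0 := mu.2.2 _ (by simp [hc])
        omega
      have h1 : j + 1 < N := by omega
      have hnotP : ¬ P (j + 1) := Nat.findGreatest_is_greatest (P := P) (n := N) (k := j + 1) (by omega) (by omega)
      have hj1 : (mu.1 ⟨j + 1, h1⟩ : ℕ) ≤ N - 1 - (j + 1) := by
        simp only [hP, not_exists, not_le] at hnotP
        have := hnotP h1
        omega
      have h2 : (mu.1 ⟨j + 1, h1⟩ : ℕ) + 2 ≤ (mu.1 ⟨j, Nat.lt_of_succ_lt h1⟩ : ℕ) := by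
        have : (mu.1 ⟨j, Nat.lt_of_succ_lt h1⟩ : ℕ) = (mu.1 ⟨j, hjN⟩ : ℕ) := by congr 1
        omega
      have hSd : S (drop mu j h1 h2) = svacN N + n := by
        have := S_drop mu j h1 h2
        omega
      have hrec := ih (drop mu j h1 h2) hSd
      rw [vmult_succ]
      calc (1 : ℕ) ≤ (if vstep N h (drop mu j h1 h2) mu then vmult N h vac n (drop mu j h1 h2) else 0) := by
            rw [if_pos (vstep_drop mu j h1 h2)]; exact hrec
        _ ≤ ∑ l : YW N h, if vstep N h l mu then vmult N h vac n l else 0 :=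
            Finset.single_le_sum
              (f := fun l : YW N h => if vstep N h l mu then vmult N h vac n l else 0)
              (fun l _ => Nat.zero_le _) (Finset.mem_univ (drop mu j h1 h2))

def col (N h n : ℕ) (hn : n ≤ N - 1) (hNh : N < h) : YW N h :=
  ⟨fun m => ⟨N - 1 - (m : ℕ) + (if (m : ℕ) < n then 1 else 0), by
      have := m.isLt; split <;> omega⟩, by
    constructor
    · intro a b hab
      have hab' : (a : ℕ) < (b : ℕ) := hab
      have hbN := b.isLt
      simp only [Fin.mk_lt_mk]
      split_ifs <;> omega
    · intro m hm
      simp only [Fin.val_mk]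
      rw [if_neg (by omega)]
      omega⟩

lemma col_val (N h n : ℕ) (hn : n ≤ N - 1) (hNh : N < h) (m : Fin N) :
    ((col N h n hn hNh).1 m : ℕ) = N - 1 - (m : ℕ) + (if (m : ℕ) < n then 1 else 0) := rfl

lemma S_col (N h n : ℕ) (hn : n ≤ N - 1) (hNh : N < h) (hN : 1 ≤ N) :
    S (col N h n hn hNh) = svacN N + n := by
  unfold S svacN
  have : ∀ m : Fin N, ((col N h n hn hNh).1 m : ℕ)
      = (N - 1 - (m : ℕ)) + (if (m : ℕ) < n then 1 else 0) := fun m => rfl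
  rw [Finset.sum_congr rfl fun m _ => this m, Finset.sum_add_distrib,
    sum_fin_ite_lt n (by omega)]

def rowP (N h n : ℕ) (mu : YW N h) : Prop :=
  ∀ m : Fin N, (mu.1 m : ℕ) = (N - 1 - (m : ℕ)) + (if (m : ℕ) = 0 then n else 0)

/-- If there is no removable corner strictly after `j0`, the tail of the diagram
is empty. -/
lemma chain_down (mu : YW N h) (j0 : ℕ)
    (hB : ∀ (t : ℕ) (h1 : t + 1 < N),
      (mu.1 ⟨t + 1, h1⟩ : ℕ) + 2 ≤ (mu.1 ⟨t, Nat.lt_of_succ_lt h1⟩ : ℕ) → t = j0) :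
    ∀ d t (ht : t < N), j0 < t → N - 1 - t = d → (mu.1 ⟨t, ht⟩ : ℕ) = N - 1 - t := by
  intro d
  induction d with
  | zero =>
      intro t ht hjt htd
      have htN : t = N - 1 := by omega
      rw [mu.2.2 ⟨t, ht⟩ (by simpa using htN)]
      omega
  | succ d ih =>
      intro t ht hjt htd
      have h1 : t + 1 < N := by omega
      have hih := ih (t + 1) h1 (by omega) (by omega)
      have hnc : ¬ ((mu.1 ⟨t + 1, h1⟩ : ℕ) + 2 ≤ (mu.1 ⟨t, Nat.lt_of_succ_lt h1⟩ : ℕ)) :=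
        fun hc => by have := hB t h1 hc; omega
      have hv : (mu.1 ⟨t, ht⟩ : ℕ) = (mu.1 ⟨t, Nat.lt_of_succ_lt h1⟩ : ℕ) := by congr 1
      have hge := val_ge mu ⟨t, ht⟩
      simp only [Fin.val_mk] at hge
      omega

/-- Below the unique corner `j0` the rows increase by exactly one each step up. -/
lemma chain_up (mu : YW N h) (j0 : ℕ) (hj0 : j0 < N)
    (hB : ∀ (t : ℕ) (h1 : t + 1 < N),
      (mu.1 ⟨t + 1, h1⟩ : ℕ) + 2 ≤ (mu.1 ⟨t, Nat.lt_of_succ_lt h1⟩ : ℕ) → t = j0) :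
    ∀ d t (ht : t < N), t + d = j0 → (mu.1 ⟨t, ht⟩ : ℕ) = (mu.1 ⟨j0, hj0⟩ : ℕ) + d := by
  intro d
  induction d with
  | zero =>
      intro t ht htd
      have : t = j0 := by omega
      subst this
      simp
  | succ d ih =>
      intro t ht htd
      have h1 : t + 1 < N := by omega
      have hih := ih (t + 1) h1 (by omega)
      have hnc : ¬ ((mu.1 ⟨t + 1, h1⟩ : ℕ) + 2 ≤ (mu.1 ⟨t, Nat.lt_of_succ_lt h1⟩ : ℕ)) :=
        fun hc => by have := hB t h1 hc; omega
      have hlt : (mu.1 ⟨t + 1, h1⟩ : ℕ) < (mu.1 ⟨t, Nat.lt_of_succ_lt h1⟩ : ℕ) :=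
        mu.2.1 _ _ (by simp [Fin.lt_def])
      have hv : (mu.1 ⟨t, ht⟩ : ℕ) = (mu.1 ⟨t, Nat.lt_of_succ_lt h1⟩ : ℕ) := by congr 1
      omega

lemma main (hN : 2 ≤ N) (hNh : N < h) (vac : YW N h)
    (hvac : ∀ m : Fin N, (vac.1 m : ℕ) = N - 1 - (m : ℕ)) :
    ∀ n (hn : n ≤ N - 1),
      vmult N h vac n (col N h n hn hNh) = 1 ∧
      ∀ mu : YW N h, mu ≠ col N h n hn hNh → ¬ rowP N h n mu →
        vmult N h vac n mu ≠ 0 → 2 ≤ vmult N h vac n mu := by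
  intro n
  induction n with
  | zero =>
      intro hn
      have hc0 : col N h 0 hn hNh = vac :=
        ywext _ _ (fun m => by rw [col_val, hvac m]; simp)
      constructor
      · rw [hc0, vmult_zero, if_pos rfl]
      · intro mu hne _ hnz
        exfalso
        rw [vmult_zero] at hnz
        have hmv : mu = vac := by by_contra hcc; rw [if_neg hcc] at hnz; exact hnz rfl
        exact hne (hmv.trans hc0.symm)
  | succ n ih =>
      intro hn
      have hn' : n ≤ N - 1 := by omega
      obtain ⟨ih1, ih2⟩ := ih hn'
      have hcn1 : n + 1 < N := by omega
      have hcn2 : ((col N h (n + 1) hn hNh).1 ⟨n + 1, hcn1⟩ : ℕ) + 2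
          ≤ ((col N h (n + 1) hn hNh).1 ⟨n, Nat.lt_of_succ_lt hcn1⟩ : ℕ) := by
        rw [col_val, col_val]
        simp only [Fin.val_mk]
        split_ifs <;> omega
      have hdc : drop (col N h (n + 1) hn hNh) n hcn1 hcn2 = col N h n hn' hNh := by
        apply ywext
        intro p
        rw [drop_val, col_val, col_val]
        have := p.isLt
        split_ifs <;> omega
      constructor
      · -- multiplicity of the column is 1
        rw [vmult_succ]
        have hone : ∀ l : YW N h, l ≠ col N h n hn' hNh →
            (if vstep N h l (col N h (n + 1) hn hNh) then vmult N h vac n l else 0) = 0 := by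
          intro l hlne
          by_cases hst : vstep N h l (col N h (n + 1) hn hNh)
          · rw [if_pos hst]
            by_contra hnz0
            have hSl : S l = svacN N + n := size_inv hN vac hvac n hn' l hnz0
            obtain ⟨t, h1, h2, rfl⟩ := step_eq_drop hN l _ hst (by omega)
            have h2' := h2
            rw [col_val, col_val] at h2'
            simp only [Fin.val_mk] at h2'
            have htn : t = n := by split_ifs at h2' <;> omega
            subst htn
            refine hlne (ywext _ _ fun p => ?_)
            rw [drop_val, col_val, col_val]
            have := p.isLt
            split_ifs <;> omega
          · rw [if_neg hst]
        rw [Finset.sum_eq_single (col N h n hn' hNh) (fun l _ hl => hone l hl)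
          (fun hmem => absurd (Finset.mem_univ _) hmem)]
        rw [if_pos (by rw [← hdc]; exact vstep_drop _ n hcn1 hcn2), ih1]
      · -- every other reachable diagram has multiplicity ≥ 2
        intro mu hne hrow hnz
        have hSmu : S mu = svacN N + (n + 1) := size_inv hN vac hvac (n + 1) hn mu hnz
        rw [vmult_succ] at hnz ⊢
        obtain ⟨l0, _, hl0⟩ := Finset.exists_ne_zero_of_sum_ne_zero hnz
        have hst0 : vstep N h l0 mu := by
          by_contra hc; rw [if_neg hc] at hl0; exact hl0 rfl
        rw [if_pos hst0] at hl0
        have hSl0 : S l0 = svacN N + n := size_inv hN vac hvac n hn' l0 hl0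
        obtain ⟨j0, hj1, hj2, rfl⟩ := step_eq_drop hN l0 mu hst0 (by omega)
        by_cases hex : ∃ (t : ℕ) (h1 : t + 1 < N),
            (mu.1 ⟨t + 1, h1⟩ : ℕ) + 2 ≤ (mu.1 ⟨t, Nat.lt_of_succ_lt h1⟩ : ℕ) ∧ t ≠ j0
        · -- at least two corners: two reachable predecessors
          obtain ⟨t, ht1, ht2, htne⟩ := hex
          have hS1 : S (drop mu t ht1 ht2) = svacN N + n := by
            have := S_drop mu t ht1 ht2; omega
          have hS0 : S (drop mu j0 hj1 hj2) = svacN N + n := by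
            have := S_drop mu j0 hj1 hj2; omega
          have hr1 := reach hN vac hvac n _ hS1
          have hr0 := reach hN vac hvac n _ hS0
          have hdne : drop mu j0 hj1 hj2 ≠ drop mu t ht1 ht2 := by
            intro hc
            have hvv := congrArg
              (fun z : YW N h => (z.1 ⟨j0, Nat.lt_of_succ_lt hj1⟩ : ℕ)) hc
            simp only [drop_val, Fin.val_mk] at hvv
            split_ifs at hvv <;> omega
          calc (2 : ℕ)
              ≤ (if vstep N h (drop mu j0 hj1 hj2) mu
                    then vmult N h vac n (drop mu j0 hj1 hj2) else 0)
                + (if vstep N h (drop mu t ht1 ht2) mu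
                    then vmult N h vac n (drop mu t ht1 ht2) else 0) := by
                rw [if_pos (vstep_drop mu j0 hj1 hj2), if_pos (vstep_drop mu t ht1 ht2)]
                omega
            _ = ∑ l ∈ ({drop mu j0 hj1 hj2, drop mu t ht1 ht2} : Finset (YW N h)),
                  (if vstep N h l mu then vmult N h vac n l else 0) :=
                (Finset.sum_pair (f := fun l : YW N h => if vstep N h l mu then vmult N h vac n l else 0) hdne).symm
            _ ≤ ∑ l : YW N h, (if vstep N h l mu then vmult N h vac n l else 0) :=
                Finset.sum_le_sum_of_subset (Finset.subset_univ _)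
        · -- unique corner: mu is a rectangle
          push_neg at hex
          have hB : ∀ (t : ℕ) (h1 : t + 1 < N),
              (mu.1 ⟨t + 1, h1⟩ : ℕ) + 2 ≤ (mu.1 ⟨t, Nat.lt_of_succ_lt h1⟩ : ℕ) → t = j0 :=
            hex
          have hd0 : (mu.1 ⟨j0 + 1, hj1⟩ : ℕ) = N - 1 - (j0 + 1) :=
            chain_down mu j0 hB (N - 1 - (j0 + 1)) (j0 + 1) hj1 (by omega) rfl
          have hcge : N - j0 ≤ (mu.1 ⟨j0, Nat.lt_of_succ_lt hj1⟩ : ℕ) := by omega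
          have hself : ∀ (a : ℕ) (ha : a < N),
              (∀ p : Fin N, (p : ℕ) ≠ a → (mu.1 p : ℕ) = N - 1 - (p : ℕ)) →
              (mu.1 ⟨a, ha⟩ : ℕ) = (N - 1 - a) + (n + 1) := by
            intro a ha hall
            have hx : ∀ p : Fin N, (mu.1 p : ℕ) = (N - 1 - (p : ℕ))
                + (if (p : ℕ) = a then (mu.1 ⟨a, ha⟩ : ℕ) - (N - 1 - a) else 0) := by
              intro p
              by_cases hp : (p : ℕ) = a
              · have hpv : (mu.1 p : ℕ) = (mu.1 ⟨a, ha⟩ : ℕ) := by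
                  rw [show p = ⟨a, ha⟩ from Fin.ext hp]
                have hge := val_ge mu ⟨a, ha⟩
                simp only [Fin.val_mk] at hge
                rw [if_pos hp]
                omega
              · rw [if_neg hp, hall p hp]; omega
            have hsum : S mu = svacN N + ((mu.1 ⟨a, ha⟩ : ℕ) - (N - 1 - a)) := by
              unfold S svacN
              rw [Finset.sum_congr rfl fun p _ => hx p, Finset.sum_add_distrib,
                sum_fin_ite_eq a ha _]
            have hge := val_ge mu ⟨a, ha⟩
            simp only [Fin.val_mk] at hge
            omega
          have hj0pos : j0 ≠ 0 := by
            intro hc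
            subst hc
            apply hrow
            intro m
            by_cases hm : (m : ℕ) = 0
            · have hall : ∀ p : Fin N, (p : ℕ) ≠ 0 → (mu.1 p : ℕ) = N - 1 - (p : ℕ) := by
                intro p hp
                have := chain_down mu 0 hB (N - 1 - (p : ℕ)) (p : ℕ) p.isLt (by omega) rfl
                rw [Fin.eta] at this
                exact this
              have h00 := hself 0 (by omega) hall
              have hmv : (mu.1 m : ℕ) = (mu.1 ⟨0, by omega⟩ : ℕ) := by
                rw [show m = ⟨0, by omega⟩ from Fin.ext hm]
              rw [if_pos hm]
              omega
            · have := chain_down mu 0 hB (N - 1 - (m : ℕ)) (m : ℕ) m.isLt (by omega) rfl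
              rw [Fin.eta] at this
              rw [if_neg hm]
              omega
          by_cases hc2 : (mu.1 ⟨j0, Nat.lt_of_succ_lt hj1⟩ : ℕ) = N - j0
          · -- mu would be the column: contradiction
            exfalso
            have hjn1 : j0 + 1 ≤ N - 1 := by omega
            have hmc : mu = col N h (j0 + 1) hjn1 hNh := by
              apply ywext
              intro m
              rw [col_val]
              by_cases hm : (m : ℕ) ≤ j0
              · have hup := chain_up mu j0 (Nat.lt_of_succ_lt hj1) hB
                  (j0 - (m : ℕ)) (m : ℕ) m.isLt (by omega)
                rw [Fin.eta] at hup
                rw [if_pos (by omega)]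
                omega
              · have := chain_down mu j0 hB (N - 1 - (m : ℕ)) (m : ℕ) m.isLt (by omega) rfl
                rw [Fin.eta] at this
                rw [if_neg (by omega)]
                omega
            have hSc : S mu = svacN N + (j0 + 1) := by
              rw [hmc]; exact S_col N h (j0 + 1) hjn1 hNh (by omega)
            have hj0n : j0 = n := by omega
            subst hj0n
            exact hne hmc
          · have hcc : N - j0 + 1 ≤ (mu.1 ⟨j0, Nat.lt_of_succ_lt hj1⟩ : ℕ) := by omega
            -- unique predecessor; apply the induction hypothesis to it
            have hsum : (∑ l : YW N h, if vstep N h l mu then vmult N h vac n l else 0)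
                = vmult N h vac n (drop mu j0 hj1 hj2) := by
              rw [Finset.sum_eq_single (drop mu j0 hj1 hj2)]
              · rw [if_pos (vstep_drop mu j0 hj1 hj2)]
              · intro l _ hlne
                by_cases hst : vstep N h l mu
                · rw [if_pos hst]
                  by_contra hz
                  have hSl : S l = svacN N + n := size_inv hN vac hvac n hn' l hz
                  obtain ⟨t, h1', h2', rfl⟩ := step_eq_drop hN l mu hst (by omega)
                  have htj := hB t h1' h2'
                  subst htj
                  exact hlne rfl
                · rw [if_neg hst]
              · intro hmem; exact absurd (Finset.mem_univ _) hmem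
            rw [hsum]
            apply ih2 (drop mu j0 hj1 hj2) ?_ ?_ hl0
            · -- not the column
              intro hc
              have h0N : 0 < N := by omega
              have hv0 := congrArg (fun z : YW N h => (z.1 ⟨0, h0N⟩ : ℕ)) hc
              simp only [drop_val, col_val, Fin.val_mk] at hv0
              have hup := chain_up mu j0 (Nat.lt_of_succ_lt hj1) hB j0 0 h0N (by omega)
              split_ifs at hv0 <;> omega
            · -- not the row
              intro hr
              have h1N : 1 < N := by omega
              have hr1 := hr ⟨1, h1N⟩
              have hne10 : ¬(1 : ℕ) = 0 := by omega
              simp only [drop_val, Fin.val_mk, if_neg hne10] at hr1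
              have hup1 := chain_up mu j0 (Nat.lt_of_succ_lt hj1) hB
                (j0 - 1) 1 h1N (by omega)
              split_ifs at hr1 <;> omega

end VP

/-- In the fusion ring of affine su(N) at level `k ≥ 2`, the antisymmetric
power `a_i` appears exactly once in `v^i`, and every other irreducible subsector
of `v^i` besides `a_i` and the symmetric power `s_i` has multiplicity `≥ 2`. -/
theorem vector_power_multiplicity (N k h : ℕ) (hN : 2 ≤ N) (hk : 2 ≤ k) (hh : h = N + k)
    (vac : YW N h) (hvac : ∀ m : Fin N, (vac.1 m : ℕ) = N - 1 - (m : ℕ))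
    (i : ℕ) (hi1 : 1 ≤ i) (hi2 : i ≤ N - 1)
    (ai : YW N h)
    (hai : ∀ m : Fin N,
      (ai.1 m : ℕ) = (N - 1 - (m : ℕ)) + (if (m : ℕ) < i then 1 else 0)) :
    vmult N h vac i ai = 1 ∧
      ∀ mu : YW N h, mu ≠ ai →
        ¬(∀ m : Fin N,
            (mu.1 m : ℕ) = (N - 1 - (m : ℕ)) + (if (m : ℕ) = 0 then i else 0)) →
        vmult N h vac i mu ≠ 0 → 2 ≤ vmult N h vac i mu := by
  have hNh : N < h := by omega
  have hai' : ai = VP.col N h i hi2 hNh :=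
    VP.ywext _ _ (fun m => by rw [hai m, VP.col_val])
  obtain ⟨h1, h2⟩ := VP.main hN hNh vac hvac i hi2
  refine ⟨by rw [hai']; exact h1, ?_⟩
  intro mu hne hrow hnz
  exact h2 mu (fun hc => hne (hc.trans hai'.symm)) hrow hnz


end
end

section
/- Let h be an endomorphism of an object V⊗V in a C*-tensor category with simple decomposition V⊗V = V_a ⊕ V_s (with projections p_a, p_s), and suppose h = x p_a + y p_s with x² = 1, y² = q² (q = exp(2πi/(N+k))), and x·d_a + y·d_s = d(v)·ω(v) where d_a = [N]_q[N−1]_q/[2]_q, d_s = [N]_q[N+1]_q/[2]_q, d(v) = [N]_q, and ω(v)·q^{(N+1)/N} corresponds to the Hecke normalization. Then necessarily x = −1 and y = q, so h satisfies the Hecke relation h² = (q−1)h + q. -/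
open Complex

/-- Determination of the Hecke eigenvalues: if `h = x p_a + y p_s` on
`V ⊗ V = V_a ⊕ V_s` with `x² = 1`, `y² = q²` (`q = exp(2πi/(N+k))`), and the
trace constraint reduces to `(x+1)[N−1]_q + (y−q)[N+1]_q = 0`, then necessarily
`x = −1` and `y = q`, so `h` satisfies the Hecke relation `h² = (q−1)h + q`. -/
theorem hecke_eigenvalues (N k : ℕ) (hN : 2 ≤ N) (hk : 2 ≤ k)
    {A : Type*} [Ring A] [Algebra ℂ A]
    (q : ℂ) (hq : q = Complex.exp (2 * Real.pi * I / ((N : ℂ) + (k : ℂ))))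
    (qint : ℕ → ℂ)
    (hqint : ∀ m : ℕ, qint m =
      (Complex.exp (Real.pi * I * (m : ℂ) / ((N : ℂ) + (k : ℂ))) -
          Complex.exp (-(Real.pi * I * (m : ℂ)) / ((N : ℂ) + (k : ℂ)))) /
        (Complex.exp (Real.pi * I / ((N : ℂ) + (k : ℂ))) -
          Complex.exp (-(Real.pi * I) / ((N : ℂ) + (k : ℂ)))))
    (x y : ℂ) (hx : x ^ 2 = 1) (hy : y ^ 2 = q ^ 2)
    (hconstraint : (x + 1) * qint (N - 1) + (y - q) * qint (N + 1) = 0)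
    (pa ps : A) (hpa : pa * pa = pa) (hps : ps * ps = ps)
    (hpaps : pa * ps = 0) (hpspa : ps * pa = 0) (hsum : pa + ps = 1) :
    x = -1 ∧ y = q ∧
      (x • pa + y • ps) * (x • pa + y • ps) =
        (q - 1) • (x • pa + y • ps) + q • (1 : A) := by
  have hc4 : (4 : ℝ) ≤ (N : ℝ) + (k : ℝ) := by
    have h2N : (2:ℝ) ≤ (N:ℝ) := by exact_mod_cast hN
    have h2k : (2:ℝ) ≤ (k:ℝ) := by exact_mod_cast hk
    linarith
  set c : ℝ := (N : ℝ) + (k : ℝ) with hc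
  have hcpos : (0:ℝ) < c := by linarith
  have hcC : ((N:ℂ) + (k:ℂ)) = (c : ℂ) := by rw [hc]; push_cast; ring
  have key : ∀ a : ℝ, Complex.exp ((a:ℂ) * I) - Complex.exp (-((a:ℂ) * I))
      = 2 * (Real.sin a : ℂ) * I := by
    intro a
    rw [Complex.exp_mul_I, ← neg_mul, Complex.exp_mul_I]
    rw [← Complex.ofReal_neg, ← Complex.ofReal_cos, ← Complex.ofReal_cos,
      ← Complex.ofReal_sin, ← Complex.ofReal_sin, Real.cos_neg, Real.sin_neg]
    push_cast
    ring
  have hsin1 : 0 < Real.sin (Real.pi / c) := by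
    apply Real.sin_pos_of_pos_of_lt_pi
    · positivity
    · rw [div_lt_iff₀ hcpos]
      nlinarith [Real.pi_pos]
  have hqint' : ∀ m : ℕ, qint m =
      ((Real.sin (Real.pi * m / c) / Real.sin (Real.pi / c) : ℝ) : ℂ) := by
    intro m
    rw [hqint m, hcC]
    have h1 : (Real.pi : ℂ) * I * (m : ℂ) / (c : ℂ) = ((Real.pi * m / c : ℝ) : ℂ) * I := by
      push_cast; field_simp
    have h2 : (Real.pi : ℂ) * I / (c : ℂ) = ((Real.pi / c : ℝ) : ℂ) * I := by
      push_cast; field_simp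
    rw [h1, neg_div, h1, h2, neg_div, h2, key, key,
      mul_div_mul_right _ _ Complex.I_ne_zero,
      mul_div_mul_left _ _ (two_ne_zero : (2:ℂ) ≠ 0)]
    push_cast
    ring
  have hsinpos : ∀ m : ℕ, 1 ≤ m → (m : ℝ) < c → 0 < Real.sin (Real.pi * m / c) := by
    intro m hm1 hmc
    apply Real.sin_pos_of_pos_of_lt_pi
    · have : (1:ℝ) ≤ (m:ℝ) := by exact_mod_cast hm1
      positivity
    · rw [div_lt_iff₀ hcpos]
      nlinarith [Real.pi_pos]
  have hNk1 : ((N - 1 : ℕ) : ℝ) < c := by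
    rw [hc]; push_cast [Nat.cast_sub (by omega : 1 ≤ N)]
    have : (2:ℝ) ≤ (k:ℝ) := by exact_mod_cast hk
    linarith
  have hNk2 : ((N + 1 : ℕ) : ℝ) < c := by
    rw [hc]; push_cast
    have : (2:ℝ) ≤ (k:ℝ) := by exact_mod_cast hk
    linarith
  obtain ⟨r1, hpos1, hr1⟩ : ∃ r : ℝ, 0 < r ∧ qint (N - 1) = (r : ℂ) :=
    ⟨_, div_pos (hsinpos _ (by omega) hNk1) hsin1, hqint' _⟩
  obtain ⟨r2, hpos2, hr2⟩ : ∃ r : ℝ, 0 < r ∧ qint (N + 1) = (r : ℂ) :=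
    ⟨_, div_pos (hsinpos _ (by omega) hNk2) hsin1, hqint' _⟩
  rw [hr1, hr2] at hconstraint
  -- q has positive imaginary part
  have hqform : q = ((Real.cos (2*Real.pi/c) : ℂ)) + (Real.sin (2*Real.pi/c) : ℂ) * I := by
    rw [hq, hcC]
    have h3 : 2 * (Real.pi : ℂ) * I / (c : ℂ) = ((2 * Real.pi / c : ℝ) : ℂ) * I := by
      push_cast; field_simp
    rw [h3, Complex.exp_mul_I, ← Complex.ofReal_cos, ← Complex.ofReal_sin]
  have hqim : 0 < Real.sin (2*Real.pi/c) := by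
    apply Real.sin_pos_of_pos_of_lt_pi
    · positivity
    · rw [div_lt_iff₀ hcpos]
      nlinarith [Real.pi_pos]
  have hqim' : q.im = Real.sin (2*Real.pi/c) := by
    rw [hqform]
    simp only [Complex.add_im, Complex.mul_im, Complex.I_im, Complex.I_re,
      Complex.ofReal_im, Complex.ofReal_re]
    ring
  have hqne : q ≠ 0 := by
    intro h
    rw [h] at hqim'
    simp only [Complex.zero_im] at hqim'
    linarith
  have hx' : x = 1 ∨ x = -1 := by
    have h : (x - 1) * (x + 1) = 0 := by linear_combination hx
    rcases mul_eq_zero.mp h with h | h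
    · left; linear_combination h
    · right; linear_combination h
  have hy' : y = q ∨ y = -q := by
    have h : (y - q) * (y + q) = 0 := by linear_combination hy
    rcases mul_eq_zero.mp h with h | h
    · left; linear_combination h
    · right; linear_combination h
  have hxval : x = -1 := by
    rcases hx' with hx1 | hx1
    · exfalso
      rcases hy' with hy1 | hy1
      · rw [hx1, hy1] at hconstraint
        have h : (r1 : ℂ) = 0 := by linear_combination hconstraint / 2
        have : r1 = 0 := by exact_mod_cast h
        linarith
      · rw [hx1, hy1] at hconstraint
        have him := congrArg Complex.im hconstraint
        simp only [Complex.add_im, Complex.mul_im, Complex.sub_im, Complex.sub_re,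
          Complex.add_re, Complex.one_im, Complex.one_re, Complex.neg_im, Complex.neg_re,
          Complex.ofReal_im, Complex.ofReal_re, Complex.zero_im, mul_zero, add_zero,
          zero_add, zero_mul, mul_one] at him
        -- him : (-q.im - q.im) * r2 = 0  (up to arrangement)
        rw [hqim'] at him
        nlinarith [him, hqim, hpos2]
    · exact hx1
  have hyval : y = q := by
    rcases hy' with hy1 | hy1
    · exact hy1
    · exfalso
      rw [hxval, hy1] at hconstraint
      have h : q * (r2 : ℂ) = 0 := by linear_combination -hconstraint / 2
      rcases mul_eq_zero.mp h with h | h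
      · exact hqne h
      · have : r2 = 0 := by exact_mod_cast h
        linarith
  refine ⟨hxval, hyval, ?_⟩
  rw [hxval, hyval, ← hsum]
  simp only [smul_add, add_mul, mul_add, smul_mul_assoc, mul_smul_comm, smul_smul,
    hpa, hps, hpaps, hpspa, smul_zero, add_zero, zero_add]
  match_scalars <;> ring
end

section
/- For a level-k weight λ of affine su(N) with conformal dimension Δ_λ = c₂(λ)/(k+N) and the rotation σ of the extended Dynkin diagram, Δ_{σ(λ)} − Δ_λ − ((N−1)k − 2τ(λ))/(2N) is an integer; consequently Δ_{σ(λ)} − Δ_λ − Δ_{σ(1)} + τ(λ)/N ∈ ℤ and Δ_{σ^{-1}(λ)} − Δ_λ − Δ_{σ^{-1}(1)} − τ(λ)/N ∈ ℤ. -/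
noncomputable section

/-- The su(N) inner product of (ρ-shifted) weights written in the basis of
fundamental weights: `⟨Λ_i, Λ_j⟩ = min(i,j) − ij/N` (1-indexed). -/
def wIP (N : ℕ) (l m : Fin (N - 1) → ℤ) : ℚ :=
  ∑ i : Fin (N - 1), ∑ j : Fin (N - 1),
    (l i : ℚ) * (m j : ℚ) *
      (min (((i : ℕ) : ℚ) + 1) (((j : ℕ) : ℚ) + 1) -
        (((i : ℕ) : ℚ) + 1) * (((j : ℕ) : ℚ) + 1) / (N : ℚ))

/-- The conformal dimension `Δ_λ = c₂(λ)/(k+N) = (|λ|² − |ρ|²)/(2h)` of the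
level-`k` weight `λ` (shifted by `ρ`, so the vacuum is `(1,…,1)`), `h = N + k`. -/
def cDim (N h : ℕ) (l : Fin (N - 1) → ℤ) : ℚ :=
  (wIP N l l - wIP N (fun _ => 1) (fun _ => 1)) / (2 * (h : ℚ))

/-- The N-ality `τ(λ) = Σ_i (λ_i − 1)·i`. -/
def nality (N : ℕ) (l : Fin (N - 1) → ℤ) : ℤ :=
  ∑ i : Fin (N - 1), (l i - 1) * (((i : ℕ) : ℤ) + 1)

/-- The diagram rotation `σ(λ) = (h − Σ_j λ_j, λ_1, …, λ_{N−2})`. -/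
def rot (N h : ℕ) (l : Fin (N - 1) → ℤ) : Fin (N - 1) → ℤ :=
  fun j => if (j : ℕ) = 0 then (h : ℤ) - ∑ i, l i
    else l ⟨(j : ℕ) - 1, lt_of_le_of_lt (Nat.pred_le _) j.isLt⟩

/-- The inverse rotation `σ⁻¹(λ) = (λ_2, …, λ_{N−1}, h − Σ_j λ_j)`. -/
def rotInv (N h : ℕ) (l : Fin (N - 1) → ℤ) : Fin (N - 1) → ℤ :=
  fun j => if h' : (j : ℕ) + 1 < N - 1 then l ⟨(j : ℕ) + 1, h'⟩ else (h : ℤ) - ∑ i, l i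

/-!
In the ε-coordinates `μ_k = Σ_{i ≥ k} λ_i` (`k = 1, …, N`, so `μ_N = 0`) the form `wIP` is the
centred square norm `|λ|² = Σ μ_k² − (Σ μ_k)²/N`, which is invariant under permutations of the
coordinates and under adding a common constant to all of them. Up to such a constant, `σ` sends `μ`
to the cyclic rotation of `(μ_1, …, μ_{N−1}, h)`, so `|σλ|² − |λ|²` only sees the coordinate
`μ_N = 0` replaced by `h`: `|σλ|² − |λ|² = h² − (2hT + h²)/N` with `T = Σ μ_k = τ(λ) + N(N−1)/2`.
Dividing by `2h = 2(N + k)` gives `Δ_{σλ} − Δ_λ = ((N−1)k − 2τ(λ))/(2N)` on the nose; `σ⁻¹` is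
reduced to `σ` through `σ(σ⁻¹λ) = λ`.
-/

section CentredNormSq

variable {ι : Type*} [Fintype ι]

def centredNormSq (v : ι → ℚ) : ℚ :=
  ∑ i, v i ^ 2 - (∑ i, v i) ^ 2 / Fintype.card ι

theorem centredNormSq_add_const (v : ι → ℚ) (c : ℚ) :
    centredNormSq (fun i => v i + c) = centredNormSq v := by
  rcases isEmpty_or_nonempty ι with hι | hι
  · simp [centredNormSq]
  have hcard : (Fintype.card ι : ℚ) ≠ 0 := by positivity
  have hsq : ∑ i, (v i + c) ^ 2 = ∑ i, v i ^ 2 + 2 * c * ∑ i, v i + Fintype.card ι * c ^ 2 := by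
    simp only [add_sq, Finset.sum_add_distrib, Finset.sum_const, Finset.card_univ, nsmul_eq_mul,
      ← Finset.sum_mul, ← Finset.mul_sum]
    ring
  have hsum : ∑ i, (v i + c) = ∑ i, v i + Fintype.card ι * c := by
    simp [Finset.sum_add_distrib]
  rw [centredNormSq, centredNormSq, hsq, hsum]
  field_simp
  ring

theorem centredNormSq_comp_equiv {κ : Type*} [Fintype κ] (v : ι → ℚ) (e : κ ≃ ι) :
    centredNormSq (v ∘ e) = centredNormSq v := by
  simp only [centredNormSq, Function.comp_apply, e.sum_comp, e.sum_comp (fun i => v i ^ 2),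
    Fintype.card_congr e]

end CentredNormSq

theorem centredNormSq_snoc {m : ℕ} (v : Fin m → ℚ) (a : ℚ) :
    centredNormSq (Fin.snoc v a : Fin (m + 1) → ℚ) =
      ∑ i, v i ^ 2 + a ^ 2 - (∑ i, v i + a) ^ 2 / (m + 1) := by
  simp [centredNormSq, Fin.sum_univ_castSucc]

theorem centredNormSq_cons_eq_snoc {m : ℕ} (v : Fin m → ℚ) (a : ℚ) :
    centredNormSq (Fin.cons a v : Fin (m + 1) → ℚ) =
      centredNormSq (Fin.snoc v a : Fin (m + 1) → ℚ) := by
  rw [Fin.snoc_eq_cons_rotate]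
  exact (centredNormSq_comp_equiv _ (finRotate (m + 1))).symm

/-- `epsCoord l k` is `μ_{k+1}`; the last coordinate is the vacant `μ_N = 0`. -/
def epsCoord {n : ℕ} (l : Fin n → ℤ) (k : Fin (n + 1)) : ℚ :=
  ∑ i, if k ≤ i.castSucc then (l i : ℚ) else 0

section EpsCoord

open Finset

variable {n : ℕ}

theorem epsCoord_last (l : Fin n → ℤ) : epsCoord l (Fin.last n) = 0 := by
  simp [epsCoord]

theorem epsCoord_cons_zero (a : ℤ) (l : Fin n → ℤ) :
    epsCoord (Fin.cons a l : Fin (n + 1) → ℤ) 0 = a + ∑ i, (l i : ℚ) := by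
  simp [epsCoord, Fin.sum_univ_succ]

theorem epsCoord_cons_succ (a : ℤ) (l : Fin n → ℤ) (k : Fin (n + 1)) :
    epsCoord (Fin.cons a l : Fin (n + 1) → ℤ) k.succ = epsCoord l k := by
  simp [epsCoord, Fin.sum_univ_succ, ← Fin.le_castSucc_iff]

theorem epsCoord_castSucc (l : Fin (n + 1) → ℤ) (k : Fin (n + 1)) :
    epsCoord l k.castSucc = epsCoord (Fin.init l) k + l (Fin.last n) := by
  simp [epsCoord, Fin.sum_univ_castSucc, Fin.init, Fin.le_last]

theorem sum_epsCoord (l : Fin n → ℤ) :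
    ∑ k, epsCoord l k = ∑ i : Fin n, (((i : ℕ) : ℚ) + 1) * l i := by
  simp only [epsCoord]
  rw [Finset.sum_comm]
  refine Finset.sum_congr rfl fun i _ => ?_
  rw [Finset.sum_ite, Finset.sum_const_zero, add_zero, Finset.sum_const, Finset.filter_ge_eq_Iic,
    Fin.card_Iic, nsmul_eq_mul]
  simp

theorem card_filter_le_castSucc_and_le_castSucc (i j : Fin n) :
    #{k : Fin (n + 1) | k ≤ i.castSucc ∧ k ≤ j.castSucc} = min ((i : ℕ) + 1) ((j : ℕ) + 1) := by
  simp only [← le_min_iff, Finset.filter_ge_eq_Iic, Fin.card_Iic]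
  rw [Fin.coe_min, Fin.val_castSucc, Fin.val_castSucc, min_add_add_right]

theorem sum_epsCoord_sq (l : Fin n → ℤ) :
    ∑ k, epsCoord l k ^ 2 =
      ∑ i : Fin n, ∑ j : Fin n, (l i : ℚ) * l j * min (((i : ℕ) : ℚ) + 1) (((j : ℕ) : ℚ) + 1) := by
  simp only [epsCoord, sq, Finset.sum_mul_sum]
  rw [Finset.sum_comm]
  refine Finset.sum_congr rfl fun i _ => ?_
  rw [Finset.sum_comm]
  refine Finset.sum_congr rfl fun j _ => ?_
  simp only [ite_zero_mul_ite_zero, Finset.sum_ite, Finset.sum_const_zero, add_zero,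
    Finset.sum_const, nsmul_eq_mul, card_filter_le_castSucc_and_le_castSucc]
  push_cast
  ring

theorem wIP_self_eq_centredNormSq (l : Fin n → ℤ) :
    wIP (n + 1) l l = centredNormSq (epsCoord l) := by
  rw [centredNormSq, sum_epsCoord_sq, sum_epsCoord, Fintype.card_fin, sq, Finset.sum_mul_sum,
    Finset.sum_div, ← Finset.sum_sub_distrib]
  refine Finset.sum_congr rfl fun i _ => ?_
  rw [Finset.sum_div, ← Finset.sum_sub_distrib]
  refine Finset.sum_congr rfl fun j _ => ?_
  push_cast
  ring

end EpsCoord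

theorem sum_fin_val_add_one (n : ℕ) : ∑ i : Fin n, (((i : ℕ) : ℚ) + 1) = n * (n + 1) / 2 := by
  induction n with
  | zero => simp
  | succ n ih =>
    rw [Fin.sum_univ_castSucc]
    simp only [Fin.val_castSucc, ih, Fin.val_last]
    push_cast
    ring

theorem nality_succ {n : ℕ} (l : Fin n → ℤ) :
    nality (n + 1) l = ∑ i : Fin n, (l i - 1) * (((i : ℕ) : ℤ) + 1) :=
  rfl

theorem sum_epsCoord_eq_nality {n : ℕ} (l : Fin n → ℤ) :
    ∑ k, epsCoord l k = nality (n + 1) l + n * (n + 1) / 2 := by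
  rw [sum_epsCoord, nality_succ, ← sum_fin_val_add_one]
  push_cast
  rw [← Finset.sum_add_distrib]
  exact Finset.sum_congr rfl fun i _ => by ring

theorem rot_eq_cons (n h : ℕ) (l : Fin (n + 1) → ℤ) :
    rot (n + 2) h l = Fin.cons ((h : ℤ) - ∑ i, l i) (Fin.init l) := by
  funext j
  refine Fin.cases ?_ (fun i => ?_) j
  · simp [rot]
  · simp only [rot, Fin.val_succ, Nat.succ_ne_zero, if_false, Fin.cons_succ, Nat.add_sub_cancel]
    rfl

theorem rotInv_eq_snoc (n h : ℕ) (l : Fin (n + 1) → ℤ) :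
    rotInv (n + 2) h l = Fin.snoc (Fin.tail l) ((h : ℤ) - ∑ i, l i) := by
  funext j
  refine Fin.lastCases ?_ (fun i => ?_) j
  · simp [rotInv]
  · have hlt : (i.castSucc : ℕ) + 1 < n + 2 - 1 := by simp
    simp only [rotInv, dif_pos hlt, Fin.snoc_castSucc]
    rfl

theorem epsCoord_rot (n h : ℕ) (l : Fin (n + 1) → ℤ) :
    (fun k => epsCoord (n := n + 1) (rot (n + 2) h l) k + l (Fin.last n)) =
      Fin.cons (h : ℚ) (Fin.init (epsCoord l)) := by
  funext k
  refine Fin.cases ?_ (fun j => ?_) k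
  · rw [rot_eq_cons, epsCoord_cons_zero, Fin.cons_zero, Fin.sum_univ_castSucc l]
    simp only [Fin.init]
    push_cast
    ring
  · rw [rot_eq_cons, epsCoord_cons_succ, Fin.cons_succ, Fin.init, epsCoord_castSucc]

theorem wIP_rot (n h : ℕ) (l : Fin (n + 1) → ℤ) :
    wIP (n + 2) (rot (n + 2) h l) (rot (n + 2) h l) =
      wIP (n + 2) l l + h ^ 2 - (2 * h * ∑ k, epsCoord l k + h ^ 2) / (n + 2) := by
  obtain ⟨μ, hμ⟩ : ∃ μ, epsCoord l = Fin.snoc μ 0 :=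
    ⟨Fin.init (epsCoord l), by rw [← epsCoord_last l, Fin.snoc_init_self]⟩
  rw [wIP_self_eq_centredNormSq, wIP_self_eq_centredNormSq,
    ← centredNormSq_add_const _ (l (Fin.last n) : ℚ), epsCoord_rot, centredNormSq_cons_eq_snoc, hμ,
    Fin.init_snoc, centredNormSq_snoc, centredNormSq_snoc]
  simp only [Fin.sum_univ_castSucc, Fin.snoc_castSucc, Fin.snoc_last]
  push_cast
  ring

theorem rot_rotInv (n h : ℕ) (l : Fin (n + 1) → ℤ) : rot (n + 2) h (rotInv (n + 2) h l) = l := by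
  rw [rotInv_eq_snoc, rot_eq_cons, Fin.init_snoc, Fin.sum_univ_castSucc, Fin.snoc_last]
  simp only [Fin.snoc_castSucc]
  conv_rhs => rw [← Fin.cons_self_tail l]
  rw [Fin.sum_univ_succ l]
  congr 1
  simp only [Fin.tail]
  ring

theorem nality_rotInv (n h : ℕ) (l : Fin (n + 1) → ℤ) :
    nality (n + 2) (rotInv (n + 2) h l) = nality (n + 2) l + (n + 1) * h - (n + 2) * ∑ i, l i := by
  rw [rotInv_eq_snoc, nality_succ, nality_succ, Fin.sum_univ_castSucc, Fin.sum_univ_succ l,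
    Fin.sum_univ_succ]
  simp only [Fin.snoc_castSucc, Fin.snoc_last, Fin.tail, Fin.val_castSucc, Fin.val_last,
    Fin.val_succ, Fin.val_zero]
  push_cast
  simp only [add_mul, sub_mul, mul_add, one_mul, mul_one, Finset.sum_add_distrib,
    Finset.sum_sub_distrib, Finset.sum_const, Finset.card_univ, Fintype.card_fin, nsmul_eq_mul]
  ring

theorem cDim_vacuum (N h : ℕ) : cDim N h (fun _ => 1) = 0 := by
  simp [cDim]

theorem nality_vacuum (N : ℕ) : nality N (fun _ => 1) = 0 := by
  simp [nality]

theorem cDim_rot_sub_cDim {N : ℕ} (hN : 2 ≤ N) (k : ℕ) (l : Fin (N - 1) → ℤ) :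
    cDim N (N + k) (rot N (N + k) l) - cDim N (N + k) l =
      (((N : ℚ) - 1) * k - 2 * nality N l) / (2 * N) := by
  obtain ⟨n, rfl⟩ := Nat.exists_eq_add_of_le' hN
  rw [cDim, cDim, div_sub_div_same, sub_sub_sub_cancel_right, wIP_rot, sum_epsCoord_eq_nality]
  push_cast
  field_simp
  ring

theorem cDim_rotInv_sub_cDim {N : ℕ} (hN : 2 ≤ N) (k : ℕ) (l : Fin (N - 1) → ℤ) :
    cDim N (N + k) (rotInv N (N + k) l) - cDim N (N + k) l =
      (((N : ℚ) - 1) * k + 2 * nality N l) / (2 * N) + ((N : ℚ) - 1 - ∑ i, l i) := by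
  have hrot := cDim_rot_sub_cDim hN k (rotInv N (N + k) l)
  obtain ⟨n, rfl⟩ := Nat.exists_eq_add_of_le' hN
  rw [rot_rotInv, nality_rotInv] at hrot
  -- `∑ i, l i` ranges over `Fin (n + 2 - 1)`; `nality_rotInv` sums over `Fin (n + 1)`
  change _ = _ + (((n + 2 : ℕ) : ℚ) - 1 - ((∑ i : Fin (n + 1), l i : ℤ) : ℚ))
  push_cast at hrot ⊢
  field_simp at hrot ⊢
  linear_combination -hrot

theorem rotation_conformal_dimension_general (N k h : ℕ) (hN : 2 ≤ N)
    (hh : h = N + k)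
    (l : Fin (N - 1) → ℤ) :
    (∃ z : ℤ, cDim N h (rot N h l) - cDim N h l -
        (((N : ℚ) - 1) * (k : ℚ) - 2 * (nality N l : ℚ)) / (2 * (N : ℚ)) = (z : ℚ)) ∧
    (∃ z : ℤ, cDim N h (rot N h l) - cDim N h l - cDim N h (rot N h (fun _ => 1)) +
        (nality N l : ℚ) / (N : ℚ) = (z : ℚ)) ∧
    (∃ z : ℤ, cDim N h (rotInv N h l) - cDim N h l - cDim N h (rotInv N h (fun _ => 1)) -
        (nality N l : ℚ) / (N : ℚ) = (z : ℚ)) := by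
  subst hh
  have hvac : cDim N (N + k) (rot N (N + k) (fun _ => 1)) = ((N : ℚ) - 1) * k / (2 * N) := by
    simpa [cDim_vacuum, nality_vacuum] using cDim_rot_sub_cDim hN k (fun _ => 1)
  have hvacInv : cDim N (N + k) (rotInv N (N + k) (fun _ => 1)) = ((N : ℚ) - 1) * k / (2 * N) := by
    simpa [cDim_vacuum, nality_vacuum, Nat.cast_sub (by omega : 1 ≤ N)] using
      cDim_rotInv_sub_cDim hN k (fun _ => 1)
  refine ⟨⟨0, ?_⟩, ⟨0, ?_⟩, ⟨N - 1 - ∑ i, l i, ?_⟩⟩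
  · rw [cDim_rot_sub_cDim hN]
    simp
  · rw [cDim_rot_sub_cDim hN, hvac]
    field_simp
    ring
  · rw [cDim_rotInv_sub_cDim hN, hvacInv]
    push_cast
    field_simp
    ring

/-- For a level-`k` weight `λ` of affine su(N):
`Δ_{σ(λ)} − Δ_λ − ((N−1)k − 2τ(λ))/(2N) ∈ ℤ`, and consequently
`Δ_{σ(λ)} − Δ_λ − Δ_{σ(1)} + τ(λ)/N ∈ ℤ` and
`Δ_{σ⁻¹(λ)} − Δ_λ − Δ_{σ⁻¹(1)} − τ(λ)/N ∈ ℤ`. -/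
theorem rotation_conformal_dimension (N k h : ℕ) (hN : 2 ≤ N) (hk : 1 ≤ k)
    (hh : h = N + k)
    (l : Fin (N - 1) → ℤ) (hl : (∀ i, 1 ≤ l i) ∧ (∑ i, l i) < (h : ℤ)) :
    (∃ z : ℤ, cDim N h (rot N h l) - cDim N h l -
        (((N : ℚ) - 1) * (k : ℚ) - 2 * (nality N l : ℚ)) / (2 * (N : ℚ)) = (z : ℚ)) ∧
    (∃ z : ℤ, cDim N h (rot N h l) - cDim N h l - cDim N h (rot N h (fun _ => 1)) +
        (nality N l : ℚ) / (N : ℚ) = (z : ℚ)) ∧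
    (∃ z : ℤ, cDim N h (rotInv N h l) - cDim N h l - cDim N h (rotInv N h (fun _ => 1)) -
        (nality N l : ℚ) / (N : ℚ) = (z : ℚ)) :=
  rotation_conformal_dimension_general N k h hN hh l

end
end

section
/- Let a net of subfactors N(I) ⊂ M(I) over intervals of the circle be standard with finite index, and suppose for every interval I with internal point removed into I_1, I_2 the smaller net is strongly additive: N(I) = N(I_1) ∨ N(I_2). Then M is strongly additive: M(I) = M(I_1) ∨ M(I_2). -/
/-- Strong additivity passes to a finite-index extension of nets
(Lemma 2.1.4): if `N(I) ⊂ M(I)` is a standard net of subfactors with finite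
index, so that (Longo–Rehren) there is an isometry `v₁ ∈ N(I₁)` with
`M(I) = N(I)·v₁`, and the smaller net is strongly additive
(`N(I) ⊆ (N(I₁) ∪ N(I₂))''`), then `M(I) = (M(I₁) ∪ M(I₂))''`
(the double commutant is the generated von Neumann algebra `M(I₁) ∨ M(I₂)`). -/
theorem strong_additivity_extension
    {H : Type*} [NormedAddCommGroup H] [InnerProductSpace ℂ H] [CompleteSpace H]
    (NI N1 N2 MI M1 M2 : VonNeumannAlgebra H)
    -- the subfactor inclusions
    (hNM : (NI : Set (H →L[ℂ] H)) ⊆ MI)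
    (hN1M1 : (N1 : Set (H →L[ℂ] H)) ⊆ M1)
    (hN2M2 : (N2 : Set (H →L[ℂ] H)) ⊆ M2)
    -- isotony
    (hM1I : (M1 : Set (H →L[ℂ] H)) ⊆ MI)
    (hM2I : (M2 : Set (H →L[ℂ] H)) ⊆ MI)
    -- Longo–Rehren: finite index yields `v₁ ∈ N(I₁)` with `M(I) = N(I) v₁`
    (v₁ : H →L[ℂ] H) (hv₁ : v₁ ∈ N1)
    (hLR : ∀ x ∈ MI, ∃ n ∈ NI, x = n * v₁)
    -- strong additivity of the smaller net
    (hNadd : (NI : Set (H →L[ℂ] H)) ⊆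
      Set.centralizer (Set.centralizer ((N1 : Set (H →L[ℂ] H)) ∪ (N2 : Set (H →L[ℂ] H))))) :
    (MI : Set (H →L[ℂ] H)) =
      Set.centralizer (Set.centralizer ((M1 : Set (H →L[ℂ] H)) ∪ (M2 : Set (H →L[ℂ] H)))) := by
  have hUnion : ((N1 : Set (H →L[ℂ] H)) ∪ N2) ⊆ ((M1 : Set (H →L[ℂ] H)) ∪ M2) :=
    Set.union_subset_union hN1M1 hN2M2
  have hmono : Set.centralizer (Set.centralizer ((N1 : Set (H →L[ℂ] H)) ∪ N2)) ⊆
      Set.centralizer (Set.centralizer ((M1 : Set (H →L[ℂ] H)) ∪ M2)) :=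
    Set.centralizer_subset (Set.centralizer_subset hUnion)
  apply Set.Subset.antisymm
  · intro x hx
    obtain ⟨n, hn, rfl⟩ := hLR x hx
    have hn' := hmono (hNadd hn)
    have hv' : v₁ ∈ Set.centralizer (Set.centralizer ((M1 : Set (H →L[ℂ] H)) ∪ M2)) :=
      Set.subset_centralizer_centralizer (Set.mem_union_left _ (hN1M1 hv₁))
    exact Set.mul_mem_centralizer hn' hv'
  · have : ((M1 : Set (H →L[ℂ] H)) ∪ M2) ⊆ MI := Set.union_subset hM1I hM2I
    calc Set.centralizer (Set.centralizer ((M1 : Set (H →L[ℂ] H)) ∪ M2))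
        ⊆ Set.centralizer (Set.centralizer (MI : Set (H →L[ℂ] H))) :=
          Set.centralizer_subset (Set.centralizer_subset this)
      _ = MI := MI.centralizer_centralizer
end

section
/- Let k = 2k₁ with k₁ odd and n = 2n₁ with n₁ odd. Then Σ_{α even, 0≤α<4k₁} exp(2πi α² n / (4k)) = G(n₁, 4k₁)/(1 − exp(−πi k₁ n₁ / 2)) and Σ_{α odd, 0≤α<4k₁} exp(2πi α² n / (4k)) = G(n₁, 4k₁)/(1 − exp(πi k₁ n₁ / 2)), where G(n₁, 4k₁) := Σ_{0≤α<4k₁} exp(2πi α² n₁ / (4k₁)) is the full Gauss sum. -/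
open Complex

private noncomputable def Fsum (k₁ n₁ : ℕ) (a : ℕ) : ℂ :=
  Complex.exp (2 * Real.pi * I * (a : ℂ) ^ 2 * (n₁ : ℂ) / (4 * (k₁ : ℂ)))

private lemma Fsum_mod (k₁ n₁ : ℕ) (hk : 0 < k₁) (x : ℕ) :
    Fsum k₁ n₁ (x % (4 * k₁)) = Fsum k₁ n₁ x := by
  have hk' : (k₁ : ℂ) ≠ 0 := Nat.cast_ne_zero.mpr hk.ne'
  set q := x / (4 * k₁) with hq
  set r := x % (4 * k₁) with hr
  have hx : x = 4 * k₁ * q + r := (Nat.div_add_mod x (4 * k₁)).symm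
  have key : (2 * Real.pi * I * (x : ℂ) ^ 2 * (n₁ : ℂ) / (4 * (k₁ : ℂ)))
      = 2 * Real.pi * I * (r : ℂ) ^ 2 * (n₁ : ℂ) / (4 * (k₁ : ℂ))
        + ((4 * k₁ * q ^ 2 * n₁ + 2 * q * r * n₁ : ℕ) : ℂ) * (2 * Real.pi * I) := by
    rw [hx]
    push_cast
    field_simp
    ring
  unfold Fsum
  rw [key, Complex.exp_add]
  rw [show (((4 * k₁ * q ^ 2 * n₁ + 2 * q * r * n₁ : ℕ)) : ℂ)
      = (((4 * k₁ * q ^ 2 * n₁ + 2 * q * r * n₁ : ℕ) : ℤ) : ℂ) by push_cast; ring,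
    Complex.exp_int_mul_two_pi_mul_I, mul_one]

private lemma Fsum_shift (k₁ n₁ : ℕ) (hk : 0 < k₁) (a : ℕ) (ha : Even a) :
    Fsum k₁ n₁ (a + k₁)
      = Complex.exp (Real.pi * I * (k₁ : ℂ) * (n₁ : ℂ) / 2) * Fsum k₁ n₁ a := by
  have hk' : (k₁ : ℂ) ≠ 0 := Nat.cast_ne_zero.mpr hk.ne'
  obtain ⟨t, ht⟩ := ha
  have key : (2 * Real.pi * I * ((a + k₁ : ℕ) : ℂ) ^ 2 * (n₁ : ℂ) / (4 * (k₁ : ℂ)))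
      = Real.pi * I * (k₁ : ℂ) * (n₁ : ℂ) / 2
        + 2 * Real.pi * I * (a : ℂ) ^ 2 * (n₁ : ℂ) / (4 * (k₁ : ℂ))
        + ((t * n₁ : ℕ) : ℂ) * (2 * Real.pi * I) := by
    have : (a : ℂ) = 2 * t := by rw [ht]; push_cast; ring
    push_cast [this]
    field_simp
    ring
  unfold Fsum
  rw [key, Complex.exp_add, Complex.exp_add]
  rw [show (((t * n₁ : ℕ)) : ℂ) = (((t * n₁ : ℕ) : ℤ) : ℂ) by push_cast; ring,
    Complex.exp_int_mul_two_pi_mul_I, mul_one]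

/-- Gauss-sum splitting (from §3.5): for `k = 2k₁`, `n = 2n₁` with `k₁, n₁` odd,
the sums of `exp(2πi α² n/(4k))` over even resp. odd residues `α mod 4k₁` are
`G(n₁,4k₁)/(1 − exp(∓πi k₁ n₁/2))`, where `G(n₁,4k₁)` is the full Gauss sum. -/
theorem gauss_sum_splitting (k₁ n₁ : ℕ) (hk₁ : Odd k₁) (hn₁ : Odd n₁)
    (hkpos : 0 < k₁) (hnpos : 0 < n₁) :
    ((∑ a ∈ (Finset.range (4 * k₁)).filter (fun a => Even a),
        Complex.exp (2 * Real.pi * I * (a : ℂ) ^ 2 * (2 * (n₁ : ℂ)) /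
          (4 * (2 * (k₁ : ℂ))))) =
      (∑ a ∈ Finset.range (4 * k₁),
          Complex.exp (2 * Real.pi * I * (a : ℂ) ^ 2 * (n₁ : ℂ) / (4 * (k₁ : ℂ)))) /
        (1 - Complex.exp (-(Real.pi) * I * (k₁ : ℂ) * (n₁ : ℂ) / 2))) ∧
    ((∑ a ∈ (Finset.range (4 * k₁)).filter (fun a => ¬ Even a),
        Complex.exp (2 * Real.pi * I * (a : ℂ) ^ 2 * (2 * (n₁ : ℂ)) /
          (4 * (2 * (k₁ : ℂ))))) =
      (∑ a ∈ Finset.range (4 * k₁),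
          Complex.exp (2 * Real.pi * I * (a : ℂ) ^ 2 * (n₁ : ℂ) / (4 * (k₁ : ℂ)))) /
        (1 - Complex.exp (Real.pi * I * (k₁ : ℂ) * (n₁ : ℂ) / 2))) := by
  have hk' : (k₁ : ℂ) ≠ 0 := Nat.cast_ne_zero.mpr hkpos.ne'
  set N := 4 * k₁ with hN
  have hNpos : 0 < N := by positivity
  set c : ℂ := Complex.exp (Real.pi * I * (k₁ : ℂ) * (n₁ : ℂ) / 2) with hc
  -- summand equality
  have hsummand : ∀ a : ℕ,
      Complex.exp (2 * Real.pi * I * (a : ℂ) ^ 2 * (2 * (n₁ : ℂ)) / (4 * (2 * (k₁ : ℂ))))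
        = Fsum k₁ n₁ a := by
    intro a
    unfold Fsum
    congr 1
    field_simp
  -- parity of mod
  have hparity : ∀ x : ℕ, (Even (x % N) ↔ Even x) := by
    intro x
    have h2 : (2 : ℕ) ∣ N := ⟨2 * k₁, by ring⟩
    rw [Nat.even_iff, Nat.even_iff, Nat.mod_mod_of_dvd x h2]
  -- c² = -1
  have hc2 : c ^ 2 = -1 := by
    obtain ⟨m, hm⟩ := hk₁.mul hn₁
    have : c ^ 2 = Complex.exp (Real.pi * I * (k₁ * n₁ : ℕ)) := by
      rw [hc, ← Complex.exp_nat_mul]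
      congr 1
      push_cast
      ring
    rw [this, hm]
    have : (Real.pi * I * ((2 * m + 1 : ℕ) : ℂ)) = ((m : ℤ) : ℂ) * (2 * Real.pi * I) + Real.pi * I := by
      push_cast; ring
    rw [this, Complex.exp_add, Complex.exp_int_mul_two_pi_mul_I, one_mul, Complex.exp_pi_mul_I]
  have hcne : c ≠ 0 := Complex.exp_ne_zero _
  have h1pc : (1 : ℂ) + c ≠ 0 := by
    intro h
    have : c = -1 := by linear_combination h
    rw [this] at hc2
    norm_num at hc2
  have h1mc : (1 : ℂ) - c ≠ 0 := by
    intro h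
    have : c = 1 := by linear_combination -h
    rw [this] at hc2
    norm_num at hc2
  -- odd sum = c * even sum
  have hbij : ∑ a ∈ (Finset.range N).filter (fun a => ¬ Even a), Fsum k₁ n₁ a
      = ∑ a ∈ (Finset.range N).filter (fun a => Even a), c * Fsum k₁ n₁ a := by
    refine (Finset.sum_nbij' (fun a => (a + k₁) % N) (fun b => (b + 3 * k₁) % N) ?_ ?_ ?_ ?_ ?_).symm
    · intro a ha
      simp only [Finset.mem_filter, Finset.mem_range] at ha ⊢
      obtain ⟨haN, hae⟩ := ha
      refine ⟨Nat.mod_lt _ hNpos, ?_⟩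
      rw [hparity]
      obtain ⟨t, ht⟩ := hae
      obtain ⟨s, hs⟩ := hk₁
      intro h
      obtain ⟨u, hu⟩ := h
      omega
    · intro b hb
      simp only [Finset.mem_filter, Finset.mem_range] at hb ⊢
      obtain ⟨hbN, hbo⟩ := hb
      refine ⟨Nat.mod_lt _ hNpos, ?_⟩
      rw [hparity]
      rw [Nat.not_even_iff_odd] at hbo
      obtain ⟨t, ht⟩ := hbo
      obtain ⟨s, hs⟩ := hk₁
      exact ⟨t + 3 * s + 2, by omega⟩
    · intro a ha
      simp only [Finset.mem_filter, Finset.mem_range] at ha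
      show ((a + k₁) % N + 3 * k₁) % N = a
      rw [Nat.mod_add_mod, show a + k₁ + 3 * k₁ = a + N by omega, Nat.add_mod_right,
        Nat.mod_eq_of_lt ha.1]
    · intro b hb
      simp only [Finset.mem_filter, Finset.mem_range] at hb
      show ((b + 3 * k₁) % N + k₁) % N = b
      rw [Nat.mod_add_mod, show b + 3 * k₁ + k₁ = b + N by omega, Nat.add_mod_right,
        Nat.mod_eq_of_lt hb.1]
    · intro a ha
      simp only [Finset.mem_filter, Finset.mem_range] at ha
      show c * Fsum k₁ n₁ a = Fsum k₁ n₁ ((a + k₁) % N)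
      rw [Fsum_mod k₁ n₁ hkpos, Fsum_shift k₁ n₁ hkpos a ha.2, hc]
  -- abbreviations
  set Se := ∑ a ∈ (Finset.range N).filter (fun a => Even a), Fsum k₁ n₁ a with hSe
  set So := ∑ a ∈ (Finset.range N).filter (fun a => ¬ Even a), Fsum k₁ n₁ a with hSo
  have hSoc : So = c * Se := hbij.trans (Finset.mul_sum _ _ _).symm
  have hG : ∑ a ∈ Finset.range N, Fsum k₁ n₁ a = Se + So :=
    (Finset.sum_filter_add_sum_filter_not _ _ _).symm
  have hGfun : (∑ a ∈ Finset.range N,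
      Complex.exp (2 * Real.pi * I * (a : ℂ) ^ 2 * (n₁ : ℂ) / (4 * (k₁ : ℂ))))
      = Se + So := by rw [← hG]; rfl
  have hcinv : Complex.exp (-(Real.pi) * I * (k₁ : ℂ) * (n₁ : ℂ) / 2) = c⁻¹ := by
    rw [hc, ← Complex.exp_neg]
    congr 1
    ring
  have hcinv' : c⁻¹ = -c := inv_eq_of_mul_eq_one_right (by linear_combination -hc2)
  constructor
  · rw [Finset.sum_congr rfl (fun a _ => hsummand a), hGfun, hcinv, hcinv', ← hSe]
    rw [sub_neg_eq_add, eq_div_iff h1pc, hSoc]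
    ring
  · rw [Finset.sum_congr rfl (fun a _ => hsummand a), hGfun, ← hSo]
    rw [eq_div_iff h1mc, hSoc]
    linear_combination (-Se) * hc2
end
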